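/- Suppose y2 − y1 ≤ √2·L. Then for every x with y1 ≤ x ≤ (y1 + y2)/2 and x < y2, one has (x − y1)/(y2 − x) ≤ exp(−(2/L²)·(y2 − y1)·((y1 + y2)/2 − x)); equivalently, (x − y1)/(y2 − x) ≤ exp(−((x − y2)² − (x − y1)²)/L²). -/

import Mathlib

/-!
Put `a = x - y1` and `b = y2 - x`, so that `0 ≤ a ≤ b` and both exponents equal
`-(b - a)(a + b)/L²`. With `u = (b - a)/(a + b)` one has `b/a = (1 + u)/(1 - u)`, and the series of
`log (1 + u) - log (1 - u)` has nonnegative terms starting with `2u`, so `a/b ≤ exp (-2u)`.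
Finally `(a + b)² = (y2 - y1)² ≤ 2L²` gives `(b - a)(a + b)/L² ≤ 2u`.
-/

open Real

lemma two_mul_le_log_one_add_sub_log_one_sub {u : ℝ} (hu₀ : 0 ≤ u) (hu₁ : u < 1) :
    2 * u ≤ log (1 + u) - log (1 - u) := by
  have hsum := hasSum_log_sub_log_of_abs_lt_one (abs_lt.mpr ⟨by linarith, hu₁⟩)
  simpa using le_hasSum hsum 0 fun k _ => by positivity

lemma div_le_exp_neg_two_mul_sub_div_add {a b : ℝ} (ha : 0 ≤ a) (hab : a ≤ b) (hb : 0 < b) :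
    a / b ≤ exp (-(2 * (b - a) / (a + b))) := by
  rcases ha.eq_or_lt with rfl | ha
  · simpa using (exp_pos _).le
  have hd : 0 < a + b := by linarith
  have hlog : log (1 + (b - a) / (a + b)) - log (1 - (b - a) / (a + b)) = log b - log a := by
    have hadd : 1 + (b - a) / (a + b) = 2 * b / (a + b) := by field_simp; ring
    have hsub : 1 - (b - a) / (a + b) = 2 * a / (a + b) := by field_simp; ring
    rw [hadd, hsub, log_div (by positivity) hd.ne', log_div (by positivity) hd.ne',
      log_mul two_ne_zero hb.ne', log_mul two_ne_zero ha.ne']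
    ring
  have hu := two_mul_le_log_one_add_sub_log_one_sub (u := (b - a) / (a + b))
    (div_nonneg (by linarith) hd.le) ((div_lt_one hd).mpr (by linarith))
  rw [← log_le_iff_le_exp (div_pos ha hb), log_div ha.ne' hb.ne']
  rw [← mul_div_assoc] at hu
  linarith

lemma mul_div_sq_le_two_mul_div {c d L : ℝ} (hc : 0 ≤ c) (hd : 0 < d) (hdL : d ^ 2 ≤ 2 * L ^ 2) :
    c * d / L ^ 2 ≤ 2 * c / d := by
  have h : d / L ^ 2 ≤ 2 / d := by
    rw [le_div_iff₀ hd, div_mul_eq_mul_div, ← sq]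
    exact div_le_of_le_mul₀ (sq_nonneg L) zero_le_two hdL
  rw [mul_div_assoc, mul_comm 2 c, mul_div_assoc]
  exact mul_le_mul_of_nonneg_left h hc

theorem ratio_le_exp_of_close_general
    (y1 y2 L : ℝ)
    (hdist : y2 - y1 ≤ Real.sqrt 2 * L) :
    ∀ x : ℝ, y1 ≤ x → x ≤ (y1 + y2) / 2 → x < y2 →
      (x - y1) / (y2 - x) ≤
        Real.exp (-(2 / L ^ 2) * (y2 - y1) * ((y1 + y2) / 2 - x)) ∧
      (x - y1) / (y2 - x) ≤
        Real.exp (-((x - y2) ^ 2 - (x - y1) ^ 2) / L ^ 2) := by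
  intro x hx₁ hxm hx₂
  have hsq : (y2 - y1) ^ 2 ≤ 2 * L ^ 2 :=
    calc (y2 - y1) ^ 2 ≤ (√2 * L) ^ 2 := pow_le_pow_left₀ (by linarith) hdist 2
      _ = 2 * L ^ 2 := by rw [mul_pow, sq_sqrt zero_le_two]
  have hratio : (x - y1) / (y2 - x) ≤ exp (-((y1 + y2 - 2 * x) * (y2 - y1) / L ^ 2)) :=
    calc (x - y1) / (y2 - x)
        ≤ exp (-(2 * ((y2 - x) - (x - y1)) / ((x - y1) + (y2 - x)))) :=
          div_le_exp_neg_two_mul_sub_div_add (by linarith) (by linarith) (by linarith)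
      _ = exp (-(2 * (y1 + y2 - 2 * x) / (y2 - y1))) := by ring_nf
      _ ≤ exp (-((y1 + y2 - 2 * x) * (y2 - y1) / L ^ 2)) :=
          exp_le_exp.mpr <| neg_le_neg <|
            mul_div_sq_le_two_mul_div (by linarith) (by linarith) hsq
  constructor
  · convert hratio using 2; ring
  · convert hratio using 2; ring

/-- Key inequality: if `y2 - y1 ≤ √2 · L`, then for `y1 ≤ x ≤ (y1+y2)/2` (and
`x < y2`), the ratio `(x - y1)/(y2 - x)` is at most
`exp(-(2/L²)(y2 - y1)((y1+y2)/2 - x))`, equivalently at most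
`exp(-((x - y2)² - (x - y1)²)/L²)`. -/
theorem ratio_le_exp_of_close
    (y1 y2 L : ℝ) (hy : y1 < y2) (hL : 0 < L)
    (hdist : y2 - y1 ≤ Real.sqrt 2 * L) :
    ∀ x : ℝ, y1 ≤ x → x ≤ (y1 + y2) / 2 → x < y2 →
      (x - y1) / (y2 - x) ≤
        Real.exp (-(2 / L ^ 2) * (y2 - y1) * ((y1 + y2) / 2 - x)) ∧
      (x - y1) / (y2 - x) ≤
        Real.exp (-((x - y2) ^ 2 - (x - y1) ^ 2) / L ^ 2) :=
  ratio_le_exp_of_close_general y1 y2 L hdist
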